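/- arXiv:2308.15588 — 2 statements merged into one kernel-verified Lean document; each statement's English description precedes it below -/
import Mathlib

section
/- Let (G,e,φ) be a k-triple and suppose X ⊆ V(G) contains both ends of e, is elementary with respect to φ, and is strongly closed with respect to φ. Then |E(G[X])| = k·(|X|−1)/2 + 1, and consequently Γ(G) ≥ k+1 > k. -/
open Finset
open scoped Classical

/-- A finite loopless multigraph on vertex type `V` with edge type `E`:
each edge is assigned its pair of (distinct) endpoints. -/
structure Multigraph (V E : Type) where
  ends : E → Sym2 V
  loopless : ∀ e, ¬ (ends e).IsDiag

namespace Multigraph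

variable {V E : Type} [Fintype V] [Fintype E] [DecidableEq V] [DecidableEq E]

/-- The degree of a vertex: the number of edges incident with it. -/
noncomputable def degree (G : Multigraph V E) (v : V) : ℕ :=
  (Finset.univ.filter fun f => v ∈ G.ends f).card

/-- The maximum degree Δ(G). -/
noncomputable def maxDegree (G : Multigraph V E) : ℕ :=
  Finset.univ.sup G.degree

/-- A proper `k`-edge-coloring of `G`: adjacent (distinct) edges get distinct colors. -/
def IsProperEdgeColoring (G : Multigraph V E) {k : ℕ} (c : E → Fin k) : Prop :=
  ∀ f g, f ≠ g → (∃ v, v ∈ G.ends f ∧ v ∈ G.ends g) → c f ≠ c g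

/-- The chromatic index χ'(G): least `k` admitting a proper `k`-edge-coloring. -/
noncomputable def chromaticIndex (G : Multigraph V E) : ℕ :=
  sInf {k : ℕ | ∃ c : E → Fin k, G.IsProperEdgeColoring c}

/-- `(S, F)` is a subgraph of `G`: every edge of `F` has both ends in `S`. -/
def IsSubgraphPair (G : Multigraph V E) (S : Finset V) (F : Finset E) : Prop :=
  ∀ f ∈ F, ∀ v ∈ G.ends f, v ∈ S

/-- The density Γ(G) = max over subgraphs `H = (S,F)` with `|S| ≥ 2` of
`⌈|F| / ⌊|S|/2⌋⌉` (computed here with natural division: `⌈a/b⌉ = (a+b-1)/b`). -/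
noncomputable def density (G : Multigraph V E) : ℕ :=
  Finset.univ.sup fun p : Finset V × Finset E =>
    if 2 ≤ p.1.card ∧ G.IsSubgraphPair p.1 p.2 then
      (p.2.card + p.1.card / 2 - 1) / (p.1.card / 2)
    else 0

/-- A proper `k`-edge-coloring of `G − e`, modelled as a total function on edges whose
value on `e` is irrelevant: properness is only required among edges distinct from `e`. -/
def IsProperColoringMinus (G : Multigraph V E) (e : E) {k : ℕ} (c : E → Fin k) : Prop :=
  ∀ f g, f ≠ e → g ≠ e → f ≠ g → (∃ v, v ∈ G.ends f ∧ v ∈ G.ends g) → c f ≠ c g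

/-- The chromatic index of `G − e`. -/
noncomputable def chromaticIndexMinus (G : Multigraph V E) (e : E) : ℕ :=
  sInf {k : ℕ | ∃ c : E → Fin k, G.IsProperColoringMinus e c}

/-- The set of colors missing at `v` under a coloring `c` of `G − e`. -/
noncomputable def missingAt (G : Multigraph V E) (e : E) {k : ℕ} (c : E → Fin k) (v : V) :
    Finset (Fin k) :=
  Finset.univ.filter fun α => ∀ f, f ≠ e → v ∈ G.ends f → c f ≠ α

/-- `X` is elementary with respect to `c`: missing color sets of distinct vertices of `X`
are pairwise disjoint. -/
def IsElementary (G : Multigraph V E) (e : E) {k : ℕ} (c : E → Fin k) (X : Finset V) : Prop :=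
  ∀ u ∈ X, ∀ v ∈ X, u ≠ v → ∀ α : Fin k, α ∈ G.missingAt e c u → α ∉ G.missingAt e c v

/-- `f` is a boundary edge of `X`: exactly one end of `f` lies in `X`. -/
def IsBoundaryEdge (G : Multigraph V E) (X : Finset V) (f : E) : Prop :=
  ∃ u v, G.ends f = s(u, v) ∧ u ∈ X ∧ v ∉ X

/-- `X` is closed with respect to `c`: no color missing at a vertex of `X` appears on a
boundary edge of `X`. -/
def IsClosedSet (G : Multigraph V E) (e : E) {k : ℕ} (c : E → Fin k) (X : Finset V) : Prop :=
  ∀ f, f ≠ e → G.IsBoundaryEdge X f → ∀ v ∈ X, c f ∉ G.missingAt e c v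

/-- `X` is strongly closed: closed, and distinct boundary edges carry distinct colors. -/
def IsStronglyClosedSet (G : Multigraph V E) (e : E) {k : ℕ} (c : E → Fin k)
    (X : Finset V) : Prop :=
  G.IsClosedSet e c X ∧
    ∀ f g, f ≠ e → g ≠ e → G.IsBoundaryEdge X f → G.IsBoundaryEdge X g → f ≠ g → c f ≠ c g

/-- A tree-sequence `(y₀, e₁, y₁, …, e_p, y_p)` with respect to `G` and `e`:
distinct vertices, distinct edges, `e₁ = e`, and each `e_j` joins `y_j` to an earlier
vertex `y_i` (`i < j`). Here `ed j` is the edge `e_{j+1}` joining `y (j+1)` to an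
earlier vertex. -/
structure TreeSeq (G : Multigraph V E) (e : E) where
  p : ℕ
  hp : 0 < p
  y : Fin (p + 1) → V
  ed : Fin p → E
  y_inj : Function.Injective y
  ed_inj : Function.Injective ed
  first : ed ⟨0, hp⟩ = e
  joins : ∀ j : Fin p, ∃ i : Fin (p + 1), (i : ℕ) ≤ (j : ℕ) ∧
    G.ends (ed j) = s(y i, y j.succ)

/-- The vertex set of a tree-sequence. -/
def TreeSeq.verts {G : Multigraph V E} {e : E} (T : G.TreeSeq e) : Finset V :=
  Finset.univ.image T.y

/-- `T` is a Tashkinov tree with respect to `e` and `c`: every edge `e_j` with `j ≥ 2`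
is colored with a color missing at some earlier vertex `y_i`, `i < j`. -/
def TreeSeq.IsTashkinov {G : Multigraph V E} {e : E} (T : G.TreeSeq e) {k : ℕ}
    (c : E → Fin k) : Prop :=
  ∀ j : Fin T.p, 1 ≤ (j : ℕ) → ∃ i : Fin (T.p + 1), (i : ℕ) ≤ (j : ℕ) ∧
    c (T.ed j) ∈ G.missingAt e c (T.y i)

/-- `T'` extends `T` (i.e. `T` is a segment of `T'`). -/
def TreeSeq.Extends {G : Multigraph V E} {e : E} (T' T : G.TreeSeq e) : Prop :=
  ∃ h : T.p ≤ T'.p,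
    (∀ i : Fin (T.p + 1), T'.y (Fin.castLE (Nat.succ_le_succ h) i) = T.y i) ∧
    ∀ j : Fin T.p, T'.ed (Fin.castLE h j) = T.ed j

/-- Reachability using only edges from the set `F`. -/
def ReachIn (G : Multigraph V E) (F : Set E) (u w : V) : Prop :=
  Relation.ReflTransGen (fun a b => ∃ f ∈ F, a ∈ G.ends f ∧ b ∈ G.ends f) u w

/-- The vertex set of the connected component of `v` in the spanning subgraph with
edge set `F`. -/
def compVerts (G : Multigraph V E) (F : Set E) (v : V) : Set V := {w | G.ReachIn F v w}

/-- The edge set of the connected component of `v` in the spanning subgraph with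
edge set `F`. -/
def compEdges (G : Multigraph V E) (F : Set E) (v : V) : Set E :=
  {f | f ∈ F ∧ ∀ u, u ∈ G.ends f → G.ReachIn F v u}

/-- `(S, F)` forms a path in `G` (possibly a single vertex). -/
def IsPathOn (G : Multigraph V E) (S : Set V) (F : Set E) : Prop :=
  ∃ (n : ℕ) (vs : Fin (n + 1) → V) (fs : Fin n → E),
    Function.Injective vs ∧ Function.Injective fs ∧
    S = Set.range vs ∧ F = Set.range fs ∧
    ∀ i : Fin n, G.ends (fs i) = s(vs i.castSucc, vs i.succ)

/-- `(S, F)` forms an even cycle in `G`. -/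
def IsEvenCycleOn (G : Multigraph V E) (S : Set V) (F : Set E) : Prop :=
  ∃ (n : ℕ) (vs : ZMod n → V) (fs : ZMod n → E),
    0 < n ∧ Even n ∧ Function.Injective vs ∧ Function.Injective fs ∧
    S = Set.range vs ∧ F = Set.range fs ∧
    ∀ i : ZMod n, G.ends (fs i) = s(vs i, vs (i + 1))

/-- `π` is a `(T, C, c)`-stable coloring: missing color sets on `V(T)` agree, and for
every color in `C` or missing somewhere on `T` under `c`, the edges incident to `T`
with that color are the same under `π` and `c`. -/
def IsStable (G : Multigraph V E) (e : E) {k : ℕ} (c π : E → Fin k) (T : G.TreeSeq e)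
    (C : Finset (Fin k)) : Prop :=
  (∀ v ∈ T.verts, G.missingAt e π v = G.missingAt e c v) ∧
  ∀ α : Fin k, (α ∈ C ∨ ∃ v ∈ T.verts, α ∈ G.missingAt e c v) →
    ∀ f, f ≠ e → (∃ v ∈ T.verts, v ∈ G.ends f) → (π f = α ↔ c f = α)

lemma exists_ends (G : Multigraph V E) (f : E) :
    ∃ u w : V, u ≠ w ∧ G.ends f = s(u, w) := by
  obtain ⟨⟨u, w⟩, h⟩ := Quot.exists_rep (G.ends f)
  refine ⟨u, w, fun huw => G.loopless f ?_, h.symm⟩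
  rw [← h, huw]
  exact Sym2.mk_isDiag_iff.mpr rfl

lemma ends_filter_card (G : Multigraph V E) (f : E) :
    (Finset.univ.filter fun v => v ∈ G.ends f).card = 2 := by
  obtain ⟨u, w, huw, hf⟩ := G.exists_ends f
  have h : (Finset.univ.filter fun v => v ∈ G.ends f) = {u, w} := by
    ext v
    simp [hf, Sym2.mem_iff]
  rw [h, Finset.card_insert_of_notMem (by simp [huw]), Finset.card_singleton]

/-- A matching covers exactly twice as many vertices as it has edges. -/
lemma matching_card (G : Multigraph V E) (M : Finset E)
    (hM : ∀ f ∈ M, ∀ g ∈ M, f ≠ g → ∀ v, v ∈ G.ends f → v ∉ G.ends g) :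
    (Finset.univ.filter fun v => ∃ f ∈ M, v ∈ G.ends f).card = 2 * M.card := by
  have hsplit : (Finset.univ.filter fun v => ∃ f ∈ M, v ∈ G.ends f)
      = M.biUnion fun f => Finset.univ.filter fun v => v ∈ G.ends f := by
    ext v; simp
  rw [hsplit, Finset.card_biUnion]
  · rw [Finset.sum_congr rfl fun f _ => G.ends_filter_card f, Finset.sum_const,
      smul_eq_mul, mul_comm]
  · intro f hf g hg hfg
    rw [Function.onFun, Finset.disjoint_left]
    intro v hvf hvg
    simp only [Finset.mem_filter, Finset.mem_univ, true_and] at hvf hvg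
    exact hM f hf g hg hfg v hvf hvg

lemma exists_missing (G : Multigraph V E) (e : E) {k : ℕ} (c : E → Fin k)
    (hk : G.maxDegree + 1 ≤ k) (v : V) : ∃ α, α ∈ G.missingAt e c v := by
  by_contra h
  push_neg at h
  have h' : ∀ α : Fin k, ∃ f, f ≠ e ∧ v ∈ G.ends f ∧ c f = α := by
    intro α
    have hα := h α
    simp only [Multigraph.missingAt, Finset.mem_filter, Finset.mem_univ, true_and,
      not_forall] at hα
    obtain ⟨f, hf⟩ := hα
    tauto
  choose f hfe hvf hcf using h'
  have hinj : Function.Injective f := fun α β hfab => by rw [← hcf α, ← hcf β, hfab]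
  have hle : k ≤ (Finset.univ.filter fun g => v ∈ G.ends g).card := by
    have := Finset.card_le_card_of_injOn (s := (Finset.univ : Finset (Fin k))) (t := Finset.univ.filter fun g => v ∈ G.ends g) f
      (fun α _ => Finset.mem_filter.mpr ⟨Finset.mem_univ _, hvf α⟩) (fun a _ b _ hab => hinj hab)
    simpa using this
  have hdeg : (Finset.univ.filter fun g => v ∈ G.ends g).card ≤ G.maxDegree :=
    Finset.le_sup (f := G.degree) (Finset.mem_univ v)
  omega

end Multigraph
/-- an elementary strongly closed set X containing both ends of e in a
k-triple spans exactly k·(|X|−1)/2 + 1 edges, and hence Γ(G) ≥ k+1. -/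
theorem strongly_closed_edge_count {V E : Type} [Fintype V] [Fintype E] [DecidableEq V] [DecidableEq E]
    (G : Multigraph V E) (e : E) {k : ℕ}
    (hk : G.maxDegree + 1 ≤ k) (hχ : G.chromaticIndex = k + 1)
    (hcrit : G.chromaticIndexMinus e < G.chromaticIndex)
    (c : E → Fin k) (hc : G.IsProperColoringMinus e c)
    (X : Finset V) (hXe : ∀ v ∈ G.ends e, v ∈ X)
    (hel : G.IsElementary e c X) (hscl : G.IsStronglyClosedSet e c X) :
    (Finset.univ.filter fun f => ∀ v ∈ G.ends f, v ∈ X).card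
        = k * ((X.card - 1) / 2) + 1 ∧
      k + 1 ≤ G.density := by
  classical
  obtain ⟨a, b, hab, hend⟩ := G.exists_ends e
  have haX : a ∈ X := hXe a (by rw [hend]; simp)
  have hbX : b ∈ X := hXe b (by rw [hend]; simp)
  have hX2 : 2 ≤ X.card := by
    have hsub : ({a, b} : Finset V) ⊆ X := by
      intro v hv
      rcases Finset.mem_insert.mp hv with rfl | hv
      · exact haX
      · exact (Finset.mem_singleton.mp hv) ▸ hbX
    calc 2 = ({a, b} : Finset V).card := by
          rw [Finset.card_insert_of_notMem (by simp [hab]), Finset.card_singleton]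
      _ ≤ X.card := Finset.card_le_card hsub
  set Fc : Fin k → Finset E := fun α =>
    Finset.univ.filter fun f => f ≠ e ∧ c f = α ∧ ∀ v ∈ G.ends f, v ∈ X with hFc
  have hFcmem : ∀ α f, f ∈ Fc α ↔ f ≠ e ∧ c f = α ∧ ∀ v ∈ G.ends f, v ∈ X := by
    intro α f; simp [hFc]
  have hmatch : ∀ α : Fin k, ∀ f ∈ Fc α, ∀ g ∈ Fc α, f ≠ g →
      ∀ v, v ∈ G.ends f → v ∉ G.ends g := by
    intro α f hf g hg hfg v hvf hvg
    rw [hFcmem] at hf hg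
    exact hc f g hf.1 hg.1 hfg ⟨v, hvf, hvg⟩ (hf.2.1.trans hg.2.1.symm)
  have hmissmem : ∀ (v : V) (α : Fin k),
      α ∈ G.missingAt e c v ↔ ∀ f, f ≠ e → v ∈ G.ends f → c f ≠ α := by
    intro v α; simp [Multigraph.missingAt]
  -- a non-missing color at a vertex of X yields an internal or boundary edge
  have hedge : ∀ (α : Fin k) (u : V), u ∈ X → α ∉ G.missingAt e c u →
      (∃ f ∈ Fc α, u ∈ G.ends f) ∨
      ∃ f w, f ≠ e ∧ c f = α ∧ G.ends f = s(u, w) ∧ w ∉ X := by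
    intro α u hu hnm
    rw [hmissmem] at hnm
    push_neg at hnm
    obtain ⟨f, hfe, huf, hcf⟩ := hnm
    obtain ⟨x, y, hxy, hfxy⟩ := G.exists_ends f
    by_cases hint : ∀ v ∈ G.ends f, v ∈ X
    · exact Or.inl ⟨f, (hFcmem α f).mpr ⟨hfe, hcf, hint⟩, huf⟩
    · push_neg at hint
      obtain ⟨w, hwf, hwX⟩ := hint
      have hwu : w ≠ u := fun h => hwX (h ▸ hu)
      have hu' : u = x ∨ u = y := by rwa [hfxy, Sym2.mem_iff] at huf
      have hw' : w = x ∨ w = y := by rwa [hfxy, Sym2.mem_iff] at hwf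
      refine Or.inr ⟨f, w, hfe, hcf, ?_, hwX⟩
      rcases hu' with rfl | rfl <;> rcases hw' with rfl | rfl
      · exact absurd rfl hwu
      · exact hfxy
      · rw [hfxy, Sym2.eq_swap]
      · exact absurd rfl hwu
  have case1 : ∀ (α : Fin k) (v : V), v ∈ X → α ∈ G.missingAt e c v →
      X.card = 2 * (Fc α).card + 1 := by
    intro α v hv hmiss
    have hcov := G.matching_card (Fc α) (hmatch α)
    have hCov : (Finset.univ.filter fun u => ∃ f ∈ Fc α, u ∈ G.ends f) = X.erase v := by
      ext u
      simp only [Finset.mem_filter, Finset.mem_univ, true_and, Finset.mem_erase]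
      constructor
      · rintro ⟨f, hf, huf⟩
        rw [hFcmem] at hf
        refine ⟨?_, hf.2.2 u huf⟩
        intro huv
        exact (hmissmem v α).mp hmiss f hf.1 (huv ▸ huf) hf.2.1
      · rintro ⟨huv, hu⟩
        have hnm : α ∉ G.missingAt e c u := hel v hv u hu (fun h => huv h.symm) α hmiss
        rcases hedge α u hu hnm with h | ⟨f, w, hfe, hcf, hfew, hwX⟩
        · exact h
        · exact absurd (show c f ∈ G.missingAt e c v by rw [hcf]; exact hmiss)
            (hscl.1 f hfe ⟨u, w, hfew, hu, hwX⟩ v hv)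
    rw [hCov, Finset.card_erase_of_mem hv] at hcov
    omega
  obtain ⟨α₀, hα₀⟩ := G.exists_missing e c hk a
  set m := (Fc α₀).card with hm
  have hXcard : X.card = 2 * m + 1 := case1 α₀ a haX hα₀
  have hm1 : 1 ≤ m := by omega
  have hall : ∀ α : Fin k, (Fc α).card = m := by
    intro α
    by_cases hca : ∃ v ∈ X, α ∈ G.missingAt e c v
    · obtain ⟨v, hv, hmv⟩ := hca
      have := case1 α v hv hmv
      omega
    · push_neg at hca
      have hcov := G.matching_card (Fc α) (hmatch α)
      set Cov := Finset.univ.filter fun u => ∃ f ∈ Fc α, u ∈ G.ends f with hCovdef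
      have hCovX : Cov ⊆ X := by
        intro u hu
        simp only [hCovdef, Finset.mem_filter, Finset.mem_univ, true_and] at hu
        obtain ⟨f, hf, huf⟩ := hu
        exact ((hFcmem α f).mp hf).2.2 u huf
      have hbd : ∀ u ∈ X \ Cov,
          ∃ f w, f ≠ e ∧ c f = α ∧ G.ends f = s(u, w) ∧ w ∉ X := by
        intro u hu
        obtain ⟨huX, huC⟩ := Finset.mem_sdiff.mp hu
        rcases hedge α u huX (hca u huX) with h | h
        · exact absurd (by
            simp only [hCovdef, Finset.mem_filter, Finset.mem_univ, true_and]
            exact h) huC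
        · exact h
      have hD : (X \ Cov).card ≤ 1 := by
        by_contra hcon
        obtain ⟨u1, hu1, u2, hu2, h12⟩ := Finset.one_lt_card.mp (show 1 < (X \ Cov).card by omega)
        obtain ⟨f1, w1, hf1e, hc1, he1, hw1⟩ := hbd u1 hu1
        obtain ⟨f2, w2, hf2e, hc2, he2, hw2⟩ := hbd u2 hu2
        by_cases hff : f1 = f2
        · subst hff
          have : u2 ∈ G.ends f1 := by rw [he2]; simp
          rw [he1, Sym2.mem_iff] at this
          rcases this with rfl | rfl
          · exact h12 rfl
          · exact hw1 (Finset.mem_sdiff.mp hu2).1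
        · exact hscl.2 f1 f2 hf1e hf2e ⟨u1, w1, he1, (Finset.mem_sdiff.mp hu1).1, hw1⟩
            ⟨u2, w2, he2, (Finset.mem_sdiff.mp hu2).1, hw2⟩ hff (hc1.trans hc2.symm)
      have hsum : (X \ Cov).card + Cov.card = X.card :=
        Finset.card_sdiff_add_card_eq_card hCovX
      omega
  -- total edge count
  set F := Finset.univ.filter fun f => ∀ v ∈ G.ends f, v ∈ X with hFdef
  have heF : e ∈ F := by
    simp only [hFdef, Finset.mem_filter, Finset.mem_univ, true_and]
    exact hXe
  have hsplit : F = insert e ((Finset.univ : Finset (Fin k)).biUnion Fc) := by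
    ext f
    simp only [hFdef, Finset.mem_filter, Finset.mem_univ, true_and, Finset.mem_insert,
      Finset.mem_biUnion]
    constructor
    · intro hint
      by_cases hfe : f = e
      · exact Or.inl hfe
      · exact Or.inr ⟨c f, (hFcmem (c f) f).mpr ⟨hfe, rfl, hint⟩⟩
    · rintro (rfl | ⟨α, hf⟩)
      · exact hXe
      · exact ((hFcmem α f).mp hf).2.2
  have hnotmem : e ∉ (Finset.univ : Finset (Fin k)).biUnion Fc := by
    intro h
    obtain ⟨α, -, hf⟩ := Finset.mem_biUnion.mp h
    exact ((hFcmem α e).mp hf).1 rfl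
  have hbi : ((Finset.univ : Finset (Fin k)).biUnion Fc).card = k * m := by
    rw [Finset.card_biUnion]
    · rw [Finset.sum_congr rfl fun α _ => hall α, Finset.sum_const, smul_eq_mul]
      simp
    · intro α _ β _ hαβ
      rw [Function.onFun, Finset.disjoint_left]
      intro f hfα hfβ
      exact hαβ (((hFcmem α f).mp hfα).2.1.symm.trans ((hFcmem β f).mp hfβ).2.1)
  have hFcard : F.card = k * m + 1 := by
    rw [hsplit, Finset.card_insert_of_notMem hnotmem, hbi]
  have hdiv : (X.card - 1) / 2 = m := by omega
  refine ⟨by rw [hdiv, hFcard], ?_⟩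
  have hpair : G.IsSubgraphPair X F := by
    intro f hf v hv
    exact (Finset.mem_filter.mp hf).2 v hv
  have hsup := Finset.le_sup (f := fun p : Finset V × Finset E =>
    if 2 ≤ p.1.card ∧ G.IsSubgraphPair p.1 p.2 then
      (p.2.card + p.1.card / 2 - 1) / (p.1.card / 2)
    else 0) (Finset.mem_univ (X, F))
  have hsup' : (if 2 ≤ X.card ∧ G.IsSubgraphPair X F then
      (F.card + X.card / 2 - 1) / (X.card / 2) else 0) ≤ G.density := hsup
  rw [if_pos ⟨hX2, hpair⟩] at hsup'
  have hval : (F.card + X.card / 2 - 1) / (X.card / 2) = k + 1 := by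
    have h2 : X.card / 2 = m := by omega
    have h3 : (k + 1) * m = k * m + m := by ring
    have h4 : F.card + X.card / 2 - 1 = (k + 1) * m := by omega
    rw [h4, h2, Nat.mul_div_cancel _ hm1]
  rw [hval] at hsup'
  exact hsup'
end

section
/- Let (G,e,φ) be a k-triple and T a tree-sequence obtained from (y_0,e,y_1) by the Tashkinov augmentation algorithm under φ. If T' and T'' are both closures of T under φ (maximal tree-sequences obtained from T by repeatedly adding boundary edges colored with missing colors of the current tree), then V(T') = V(T''). -/
open Finset
open scoped Classical

lemma closure_verts_subset {V E : Type} [Fintype V] [Fintype E] [DecidableEq V] [DecidableEq E]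
    (G : Multigraph V E) (e : E) {k : ℕ} (c : E → Fin k)
    (T A B : G.TreeSeq e) (hA : A.IsTashkinov c)
    (hextA : A.Extends T) (hextB : B.Extends T)
    (hclB : G.IsClosedSet e c B.verts) :
    A.verts ⊆ B.verts := by
  obtain ⟨hpA, hyA, hedA⟩ := hextA
  obtain ⟨hpB, hyB, hedB⟩ := hextB
  have key : ∀ n, ∀ hn : n < A.p + 1, A.y ⟨n, hn⟩ ∈ B.verts := by
    intro n
    induction n using Nat.strong_induction_on with
    | _ n IH =>
      intro hn
      by_cases hle : n ≤ T.p
      · -- vertex of T, hence in B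
        have h1 : A.y ⟨n, hn⟩ = T.y ⟨n, Nat.lt_succ_of_le hle⟩ := by
          have := hyA ⟨n, Nat.lt_succ_of_le hle⟩
          simpa [Fin.castLE] using this
        have h2 : B.y (Fin.castLE (Nat.succ_le_succ hpB) ⟨n, Nat.lt_succ_of_le hle⟩)
            = T.y ⟨n, Nat.lt_succ_of_le hle⟩ := hyB _
        rw [h1, ← h2]
        exact Finset.mem_image_of_mem _ (Finset.mem_univ _)
      · push_neg at hle
        have hn1 : 1 ≤ T.p := T.hp
        have hnge : 2 ≤ n := by omega
        have hj' : n - 1 < A.p := by omega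
        set j' : Fin A.p := ⟨n - 1, hj'⟩ with hj'def
        have hsucc : j'.succ = ⟨n, hn⟩ := by
          apply Fin.ext; simp [Fin.succ, hj'def]; omega
        obtain ⟨i, hi, hends⟩ := A.joins j'
        obtain ⟨i₂, hi₂, hmiss⟩ := hA j' (by simp [hj'def]; omega)
        have hiv : (i : ℕ) ≤ n - 1 := hi
        have hi₂v : (i₂ : ℕ) ≤ n - 1 := hi₂
        have hiB : A.y i ∈ B.verts := by
          have : (i : ℕ) < n := by omega
          have := IH i this i.isLt
          simpa using this
        have hi₂B : A.y i₂ ∈ B.verts := by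
          have : (i₂ : ℕ) < n := by omega
          have := IH i₂ this i₂.isLt
          simpa using this
        by_contra hnotin
        have hne : A.ed j' ≠ e := by
          intro h
          have : j' = ⟨0, A.hp⟩ := A.ed_inj (by rw [h, A.first])
          have : (j' : ℕ) = 0 := by rw [this]
          simp [hj'def] at this; omega
        have hbd : G.IsBoundaryEdge B.verts (A.ed j') := by
          refine ⟨A.y i, A.y ⟨n, hn⟩, ?_, hiB, hnotin⟩
          rw [hends, hsucc]
        exact hclB (A.ed j') hne hbd (A.y i₂) hi₂B hmiss
  intro x hx
  obtain ⟨j, _, rfl⟩ := Finset.mem_image.mp hx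
  have := key j j.isLt
  simpa using this

/-- any two closures of the same Tashkinov tree have the same vertex set. -/
theorem closures_same_vertex_set {V E : Type} [Fintype V] [Fintype E] [DecidableEq V] [DecidableEq E]
    (G : Multigraph V E) (e : E) {k : ℕ}
    (hk : G.maxDegree + 1 ≤ k) (hχ : G.chromaticIndex = k + 1)
    (hcrit : G.chromaticIndexMinus e < G.chromaticIndex)
    (c : E → Fin k) (hc : G.IsProperColoringMinus e c)
    (T T' T'' : G.TreeSeq e) (hT : T.IsTashkinov c)
    (hT' : T'.IsTashkinov c) (hT'' : T''.IsTashkinov c)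
    (hext' : T'.Extends T) (hext'' : T''.Extends T)
    (hcl' : G.IsClosedSet e c T'.verts) (hcl'' : G.IsClosedSet e c T''.verts) :
T'.verts = T''.verts := by
  exact subset_antisymm
    (closure_verts_subset G e c T T' T'' hT' hext' hext'' hcl'')
    (closure_verts_subset G e c T T'' T' hT'' hext'' hext' hcl')
end
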